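/- Let F be an r-sort species admitting a composition operator Η, and let Ω1, Ω2, Ω3 be pairwise componentwise-disjoint r-tuples of finite sets. Then every Η-bracketing of F[Ω1], F[Ω2], F[Ω3] equals the triple intersection η(F[Ω1⨿Ω2] × F[Ω3]) ∩ η(F[Ω1⨿Ω3] × F[Ω2]) ∩ η(F[Ω2⨿Ω3] × F[Ω1]). -/

import Mathlib

open scoped Classical

noncomputable section

/-- Objects of `Set^r`: `r`-tuples of finite sets (realized as finite subsets of `ℕ`). -/
abbrev Obj (r : ℕ) := Fin r → Finset ℕ

variable {r : ℕ}

/-- The `r`-tuple of empty sets. -/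
def oEmpty (r : ℕ) : Obj r := fun _ => ∅

/-- Componentwise union (the disjoint union `⨿` when the arguments are
componentwise disjoint). -/
def oUnion (Ω₁ Ω₂ : Obj r) : Obj r := fun i => Ω₁ i ∪ Ω₂ i

/-- Componentwise intersection. -/
def oInter (Ω₁ Ω₂ : Obj r) : Obj r := fun i => Ω₁ i ∩ Ω₂ i

/-- Componentwise set difference. -/
def oDiff (Ω₁ Ω₂ : Obj r) : Obj r := fun i => Ω₁ i \ Ω₂ i

/-- Componentwise disjointness. -/
def oDisj (Ω₁ Ω₂ : Obj r) : Prop := ∀ i, Disjoint (Ω₁ i) (Ω₂ i)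

/-- Componentwise containment. -/
def oSub (Ω₁ Ω₂ : Obj r) : Prop := ∀ i, Ω₁ i ⊆ Ω₂ i

/-- A morphism of `Set^r`: an `r`-tuple of bijections between the components. -/
def Mor (Ω₁ Ω₂ : Obj r) : Type := ∀ i, {x // x ∈ Ω₁ i} ≃ {x // x ∈ Ω₂ i}

/-- The identity morphism. -/
def idMor (Ω : Obj r) : Mor Ω Ω := fun _ => Equiv.refl _

/-- Composition of morphisms. -/
def compMor {Ω₁ Ω₂ Ω₃ : Obj r} (f : Mor Ω₁ Ω₂) (g : Mor Ω₂ Ω₃) : Mor Ω₁ Ω₃ :=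
  fun i => (f i).trans (g i)

/-- An `r`-sort species: a (covariant) functor from `Set^r` to the category of
finite sets and bijections.  The value `F[Ω]` is the finite set `obj Ω`, and the
action on a morphism `f` is encoded by the function `map f : ℕ → ℕ` (only its
values on `obj Ω₁` are relevant). -/
structure Species (r : ℕ) where
  obj : Obj r → Finset ℕ
  map : ∀ {Ω₁ Ω₂ : Obj r}, Mor Ω₁ Ω₂ → ℕ → ℕ
  map_mem : ∀ {Ω₁ Ω₂ : Obj r} (f : Mor Ω₁ Ω₂), ∀ x ∈ obj Ω₁, map f x ∈ obj Ω₂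
  map_id : ∀ (Ω : Obj r), ∀ x ∈ obj Ω, map (idMor Ω) x = x
  map_comp : ∀ {Ω₁ Ω₂ Ω₃ : Obj r} (f : Mor Ω₁ Ω₂) (g : Mor Ω₂ Ω₃), ∀ x ∈ obj Ω₁,
    map (compMor f g) x = map g (map f x)

/-- The canonical identification of a disjoint union `s ∪ t` with the sum `s ⊕ t`. -/
def finsetSumEquiv {s t : Finset ℕ} (h : Disjoint s t) :
    {x // x ∈ s ∪ t} ≃ {x // x ∈ s} ⊕ {x // x ∈ t} :=
  (Equiv.subtypeEquivRight (fun x => by simp)).trans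
    (Equiv.Set.union (s := (↑s : Set ℕ)) (t := (↑t : Set ℕ)) (by exact_mod_cast h))

/-- The disjoint union of two bijections, as a bijection between unions. -/
def finsetUnionEquiv {s t s' t' : Finset ℕ} (h : Disjoint s t) (h' : Disjoint s' t')
    (f : {x // x ∈ s} ≃ {x // x ∈ s'}) (g : {x // x ∈ t} ≃ {x // x ∈ t'}) :
    {x // x ∈ s ∪ t} ≃ {x // x ∈ s' ∪ t'} :=
  (finsetSumEquiv h).trans ((f.sumCongr g).trans (finsetSumEquiv h').symm)

/-- The disjoint union `f ⨿ g` of two morphisms of `Set^r`. -/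
def morUnion {Ω₁ Ω₂ Ω₁' Ω₂' : Obj r} (h : oDisj Ω₁ Ω₂) (h' : oDisj Ω₁' Ω₂')
    (f : Mor Ω₁ Ω₁') (g : Mor Ω₂ Ω₂') : Mor (oUnion Ω₁ Ω₂) (oUnion Ω₁' Ω₂') :=
  fun i => finsetUnionEquiv (h i) (h' i) (f i) (g i)

/-- A composition operator `Η` for the species `F`: a natural transformation from
`F × F` (on pairs of componentwise disjoint objects) to `F ∘ ⨿` with injective
components, satisfying Axiom (D1). -/
structure CompOp {r : ℕ} (F : Species r) where
  η : Obj r → Obj r → ℕ × ℕ → ℕ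
  mem_η : ∀ {Ω₁ Ω₂ : Obj r}, oDisj Ω₁ Ω₂ → ∀ x ∈ F.obj Ω₁, ∀ y ∈ F.obj Ω₂,
    η Ω₁ Ω₂ (x, y) ∈ F.obj (oUnion Ω₁ Ω₂)
  inj_η : ∀ {Ω₁ Ω₂ : Obj r}, oDisj Ω₁ Ω₂ →
    Set.InjOn (η Ω₁ Ω₂) ((F.obj Ω₁ : Set ℕ) ×ˢ (F.obj Ω₂ : Set ℕ))
  natural : ∀ {Ω₁ Ω₂ Ω₁' Ω₂' : Obj r} (h : oDisj Ω₁ Ω₂) (h' : oDisj Ω₁' Ω₂')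
    (f : Mor Ω₁ Ω₁') (g : Mor Ω₂ Ω₂'), ∀ x ∈ F.obj Ω₁, ∀ y ∈ F.obj Ω₂,
    F.map (morUnion h h' f g) (η Ω₁ Ω₂ (x, y)) = η Ω₁' Ω₂' (F.map f x, F.map g y)
  D1 : ∀ {Ω₁ Ω₂ Ω₃ Ω₄ : Obj r}, oDisj Ω₁ Ω₂ → oDisj Ω₃ Ω₄ →
    oUnion Ω₁ Ω₂ = oUnion Ω₃ Ω₄ →
    η Ω₁ Ω₂ '' ((F.obj Ω₁ : Set ℕ) ×ˢ (F.obj Ω₂ : Set ℕ)) ∩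
      η Ω₃ Ω₄ '' ((F.obj Ω₃ : Set ℕ) ×ˢ (F.obj Ω₄ : Set ℕ)) =
    η Ω₁ Ω₂ ''
      ((η (oInter Ω₁ Ω₃) (oInter Ω₁ Ω₄) ''
          ((F.obj (oInter Ω₁ Ω₃) : Set ℕ) ×ˢ (F.obj (oInter Ω₁ Ω₄) : Set ℕ))) ×ˢ
        (η (oInter Ω₂ Ω₃) (oInter Ω₂ Ω₄) ''
          ((F.obj (oInter Ω₂ Ω₃) : Set ℕ) ×ˢ (F.obj (oInter Ω₂ Ω₄) : Set ℕ))))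

/-- The set `F_Η[Ω]` of indecomposable elements of `F[Ω]`. -/
def indec (F : Species r) (E : CompOp F) (Ω : Obj r) : Set ℕ :=
  if Ω = oEmpty r then ∅
  else (F.obj Ω : Set ℕ) \
    ⋃ (p : Obj r × Obj r) (_ : oDisj p.1 p.2) (_ : p.1 ≠ oEmpty r) (_ : p.2 ≠ oEmpty r)
      (_ : oUnion p.1 p.2 = Ω),
      E.η p.1 p.2 '' ((F.obj p.1 : Set ℕ) ×ˢ (F.obj p.2 : Set ℕ))

/-- The sets `F_Η^(k)[Ω]` of elements of `F[Ω]` consisting of exactly `k`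
indecomposable components. -/
def indecK (F : Species r) (E : CompOp F) : ℕ → Obj r → Set ℕ
  | 0 => fun Ω => if Ω = oEmpty r then (F.obj (oEmpty r) : Set ℕ) else ∅
  | (k + 1) => fun Ω => ⋃ (Ω₁ : Obj r) (_ : oSub Ω₁ Ω),
      E.η Ω₁ (oDiff Ω Ω₁) '' ((indec F E Ω₁) ×ˢ (indecK F E k (oDiff Ω Ω₁)))

/-- `Ω_I`: the componentwise disjoint union of the family `Ωs` over the index set `s`. -/
def bigU {ι : Type} [DecidableEq ι] (Ωs : ι → Obj r) (s : Finset ι) : Obj r :=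
  fun i => s.biUnion (fun j => Ωs j i)

/-- `Brack F E Ωs leaf s B` says that `B` is an `Η`-bracketing of the sets
`leaf (Ωs i)`, `i ∈ s` (each occurring exactly once).  For `leaf Ω = F[Ω]` this is an
`Η`-bracketing of the `F[Ωs i]`; for `leaf = indec F E` it is an `Η`-bracketing of
the `F_Η[Ωs i]`. -/
inductive Brack (F : Species r) (E : CompOp F) {ι : Type} [DecidableEq ι]
    (Ωs : ι → Obj r) (leaf : Obj r → Set ℕ) : Finset ι → Set ℕ → Prop
  | single (i : ι) : Brack F E Ωs leaf {i} (leaf (Ωs i))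
  | node {s t : Finset ι} {B₁ B₂ : Set ℕ} :
      Disjoint s t → s.Nonempty → t.Nonempty →
      Brack F E Ωs leaf s B₁ → Brack F E Ωs leaf t B₂ →
      Brack F E Ωs leaf (s ∪ t) (E.η (bigU Ωs s) (bigU Ωs t) '' (B₁ ×ˢ B₂))

/-- A `Λ`-weight on `(F, Η)`: Axioms (W0), (W1), (W2). -/
structure Weight {r : ℕ} (F : Species r) (E : CompOp F) (Λ : Type) [CommRing Λ]
    [Algebra ℚ Λ] where
  w : Obj r → ℕ → Λ
  W0 : ∀ x ∈ F.obj (oEmpty r), w (oEmpty r) x = 1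
  W1 : ∀ {Ω Ω' : Obj r} (f : Mor Ω Ω'), ∀ x ∈ F.obj Ω, w Ω' (F.map f x) = w Ω x
  W2 : ∀ {Ω₁ Ω₂ : Obj r}, oDisj Ω₁ Ω₂ → ∀ x ∈ indec F E Ω₁, ∀ y ∈ F.obj Ω₂,
    w (oUnion Ω₁ Ω₂) (E.η Ω₁ Ω₂ (x, y)) = w Ω₁ x * w Ω₂ y

/-- The standard object `([n₁], …, [n_r])`, with `[n] = {1, …, n}`. -/
def stdObj {r : ℕ} (n : Fin r → ℕ) : Obj r := fun i => Finset.Icc 1 (n i)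

/-- The exponential generating function
`Σ_{n₁,…,n_r ≥ 0} Σ_{x ∈ S[([n₁],…,[n_r])]} w(x) z₁^{n₁} ⋯ z_r^{n_r}/(n₁! ⋯ n_r!)`
of a subfamily `S` of a species `F`, with respect to a weight `w`. -/
def GF {r : ℕ} {Λ : Type} [CommRing Λ] [Algebra ℚ Λ] (F : Species r)
    (S : Obj r → Set ℕ) (w : Obj r → ℕ → Λ) : MvPowerSeries (Fin r) Λ :=
  fun d => (algebraMap ℚ Λ (∏ i, (1 / (Nat.factorial (d i)) : ℚ))) *
    ∑ x ∈ (F.obj (stdObj fun i => d i)).filter (fun x => x ∈ S (stdObj fun i => d i)),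
      w (stdObj fun i => d i) x

/-- The exponential `exp f = Σ_{k ≥ 0} f^k / k!` of a multivariate formal power
series `f` with zero constant term (the coefficient of a given monomial only
receives contributions from `k` at most the total degree). -/
def mvExp {σ Λ : Type} [CommRing Λ] [Algebra ℚ Λ] (f : MvPowerSeries σ Λ) :
    MvPowerSeries σ Λ :=
  fun d => ∑ k ∈ Finset.range ((d.sum fun _ m => m) + 1),
    algebraMap ℚ Λ ((1 : ℚ) / (Nat.factorial k)) * MvPowerSeries.coeff d (f ^ k)

/-- The logarithm `log f = Σ_{k ≥ 1} (-1)^{k+1} (f-1)^k / k` of a multivariate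
formal power series `f` with constant term `1`. -/
def mvLog {σ Λ : Type} [CommRing Λ] [Algebra ℚ Λ] (f : MvPowerSeries σ Λ) :
    MvPowerSeries σ Λ :=
  fun d => ∑ k ∈ Finset.Icc 1 (d.sum fun _ m => m),
    algebraMap ℚ Λ ((-1 : ℚ) ^ (k + 1) / k) * MvPowerSeries.coeff d ((f - 1) ^ k)

/-- The refined generating function `G̃F_F(z₁,…,z_r,y)`, a power series in
`z₁, …, z_r` with coefficients that are polynomials in `y` (recorded via
`Polynomial Λ`, the variable `y` being `Polynomial.X`):
`Σ_{n₁,…,n_r ≥ 0} Σ_k Σ_{x ∈ F_Η^(k)[([n₁],…,[n_r])]} y^k w(x) z₁^{n₁}⋯z_r^{n_r}/(n₁!⋯n_r!)`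
(for fixed `n₁, …, n_r` only the `k ≤ n₁ + ⋯ + n_r` contribute, since
`F_Η^(k)[Ω] = ∅ for k > ‖Ω‖`). -/
def tGF {r : ℕ} {Λ : Type} [CommRing Λ] [Algebra ℚ Λ] (F : Species r) (E : CompOp F)
    (w : Obj r → ℕ → Λ) : MvPowerSeries (Fin r) (Polynomial Λ) :=
  fun d => Polynomial.C (algebraMap ℚ Λ (∏ i, (1 / (Nat.factorial (d i)) : ℚ))) *
    ∑ k ∈ Finset.range ((∑ i, d i) + 1), Polynomial.X ^ k *
      Polynomial.C (∑ x ∈ (F.obj (stdObj fun i => d i)).filter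
          (fun x => x ∈ indecK F E k (stdObj fun i => d i)),
        w (stdObj fun i => d i) x)

/-- The species `E(F_Η)` of sets of `F_Η`-structures:  `E(F_Η)[Ω]` consists of all
finite sets `{(x₁,Ω₁),…,(x_k,Ω_k)}` with `x_i ∈ F_Η[Ω_i]`, the `Ω_i` nonempty and
pairwise componentwise disjoint, and `Ω₁ ⨿ ⋯ ⨿ Ω_k = Ω`. -/
def ESet {r : ℕ} (F : Species r) (E : CompOp F) (Ω : Obj r) :
    Set (Finset (ℕ × Obj r)) :=
  { s | (∀ p ∈ s, p.1 ∈ indec F E p.2 ∧ p.2 ≠ oEmpty r) ∧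
        (∀ p ∈ s, ∀ q ∈ s, p ≠ q → oDisj p.2 q.2) ∧
        (∀ i, Ω i = s.biUnion (fun p => p.2 i)) }

/-- The bijection between a finite set and its image under a map injective on it. -/
def imageEquiv {u : Finset ℕ} (g : ℕ → ℕ) (hg : Set.InjOn g (u : Set ℕ)) :
    {x // x ∈ u} ≃ {x // x ∈ u.image g} :=
  Equiv.ofBijective (fun x => ⟨g x, Finset.mem_image_of_mem g x.2⟩) (by
    constructor
    · rintro ⟨a, ha⟩ ⟨b, hb⟩ hab
      exact Subtype.ext (hg (by exact_mod_cast ha) (by exact_mod_cast hb)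
        (congrArg Subtype.val hab))
    · rintro ⟨y, hy⟩
      rcases Finset.mem_image.mp hy with ⟨a, ha, rfl⟩
      exact ⟨⟨a, ha⟩, rfl⟩)

/-- The underlying function `ℕ → ℕ` of the `i`-th component of a morphism. -/
def apMor {Ω Ω' : Obj r} (f : Mor Ω Ω') (i : Fin r) (a : ℕ) : ℕ :=
  if h : a ∈ Ω i then ((f i) ⟨a, h⟩ : ℕ) else a

/-- The componentwise image of a subobject `O ⊆ Ω` under a morphism `f : Ω → Ω'`. -/
def oImage {Ω Ω' : Obj r} (f : Mor Ω Ω') (O : Obj r) : Obj r :=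
  fun i => (O i).image (apMor f i)

/-- The restriction of a morphism `f : Ω → Ω'` to a subobject `O ⊆ Ω`. -/
def restrictMor {Ω Ω' : Obj r} (f : Mor Ω Ω') {O : Obj r} (hO : oSub O Ω) :
    Mor O (oImage f O) :=
  fun i => imageEquiv (apMor f i) (by
    intro a ha b hb hab
    have ha' : a ∈ Ω i := hO i (by exact_mod_cast ha)
    have hb' : b ∈ Ω i := hO i (by exact_mod_cast hb)
    have h1 : ((f i) ⟨a, ha'⟩ : ℕ) = ((f i) ⟨b, hb'⟩ : ℕ) := by
      simpa [apMor, dif_pos ha', dif_pos hb'] using hab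
    have h2 := (f i).injective (Subtype.ext h1)
    exact congrArg Subtype.val h2)

/-- The induced action of a morphism `f : Ω → Ω'` on `E(F_Η)[Ω]`. -/
def Emap {r : ℕ} (F : Species r) {Ω Ω' : Obj r} (f : Mor Ω Ω')
    (s : Finset (ℕ × Obj r)) : Finset (ℕ × Obj r) :=
  s.image (fun p =>
    if h : oSub p.2 Ω then (F.map (restrictMor f h) p.1, oImage f p.2) else p)

/-!
Applying (D1) to a decomposition `A ⨿ B` and itself, injectivity of `η` gives
`η(F[A] × F[∅]) = F[A]` and `η(F[∅] × F[B]) = F[B]` when `F[A]` and `F[B]` are nonempty; applied to `A ⨿ B` and `B ⨿ A` it then shows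
that the image of `η` does not depend on the order of the factors.
For pairwise disjoint `X, Y, C`, (D1) for the decompositions `(X ⨿ Y) ⨿ C` and `(X ⨿ C) ⨿ Y`
identifies the intersection of two of the three sets with the bracketing
`η(η(F[X] × F[Y]) × F[C])`. Exchanging `X` and `Y` identifies the same bracketing with another
such intersection, so it equals the intersection of all three. The other bracketing shape,
`η(F[C] × η(F[X] × F[Y]))`, is reduced to this one by (D1) for `C ⨿ (X ⨿ Y)` and `(X ⨿ C) ⨿ Y`.
If one of `F[X], F[Y], F[C]` is empty, both sides are empty.
-/

section SetTuples

variable {A B C : Obj r}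

lemma oDisj.symm (h : oDisj A B) : oDisj B A := fun i => (h i).symm

lemma oDisj.union_left (hA : oDisj A C) (hB : oDisj B C) : oDisj (oUnion A B) C :=
  fun i => Finset.disjoint_union_left.mpr ⟨hA i, hB i⟩

lemma oDisj_oEmpty (A : Obj r) : oDisj A (oEmpty r) := fun _ => Finset.disjoint_empty_right _

lemma oUnion_comm (A B : Obj r) : oUnion A B = oUnion B A :=
  funext fun _ => Finset.union_comm _ _

lemma oUnion_right_comm (A B C : Obj r) : oUnion (oUnion A B) C = oUnion (oUnion A C) B :=
  funext fun _ => Finset.union_right_comm _ _ _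

lemma oUnion_oEmpty (A : Obj r) : oUnion A (oEmpty r) = A :=
  funext fun _ => Finset.union_empty _

lemma oInter_self (A : Obj r) : oInter A A = A :=
  funext fun _ => Finset.inter_self _

lemma oInter_eq_oEmpty (h : oDisj A B) : oInter A B = oEmpty r :=
  funext fun i => Finset.disjoint_iff_inter_eq_empty.mp (h i)

lemma oInter_oUnion_self (A B : Obj r) : oInter (oUnion A B) B = B :=
  funext fun _ => Finset.inter_eq_right.mpr Finset.subset_union_right

lemma oInter_self_oUnion (A B : Obj r) : oInter B (oUnion A B) = B :=
  funext fun _ => Finset.inter_eq_left.mpr Finset.subset_union_right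

lemma oInter_oUnion_oUnion (h : oDisj B C) : oInter (oUnion A B) (oUnion A C) = A :=
  funext fun i => by
    simp only [oInter, oUnion, ← Finset.union_inter_distrib_left,
      Finset.disjoint_iff_inter_eq_empty.mp (h i), Finset.union_empty]

end SetTuples

namespace CompOp

variable {F : Species r} (E : CompOp F) {A B X Y C : Obj r}

def img (A B : Obj r) : Set ℕ :=
  E.η A B '' ((F.obj A : Set ℕ) ×ˢ (F.obj B : Set ℕ))

lemma img_subset (h : oDisj A B) : E.img A B ⊆ F.obj (oUnion A B) := by
  rintro _ ⟨⟨x, y⟩, ⟨hx, hy⟩, rfl⟩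
  exact E.mem_η h x hx y hy

lemma img_inter_img {A₁ A₂ B₁ B₂ P Q R S : Obj r} (hA : oDisj A₁ A₂) (hB : oDisj B₁ B₂)
    (hu : oUnion A₁ A₂ = oUnion B₁ B₂) (hP : oInter A₁ B₁ = P) (hQ : oInter A₁ B₂ = Q)
    (hR : oInter A₂ B₁ = R) (hS : oInter A₂ B₂ = S) :
    E.img A₁ A₂ ∩ E.img B₁ B₂ = E.η A₁ A₂ '' (E.img P Q ×ˢ E.img R S) := by
  subst hP hQ hR hS
  exact E.D1 hA hB hu

lemma prod_eq_img_oEmpty_prod (h : oDisj A B) :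
    (F.obj A : Set ℕ) ×ˢ (F.obj B : Set ℕ) = E.img A (oEmpty r) ×ˢ E.img (oEmpty r) B := by
  have hD1 := E.img_inter_img h h rfl (oInter_self A) (oInter_eq_oEmpty h)
    (oInter_eq_oEmpty h.symm) (oInter_self B)
  rw [Set.inter_self] at hD1
  refine ((E.inj_η h).image_eq_image_iff subset_rfl (Set.prod_mono ?_ ?_)).mp hD1
  · simpa only [oUnion_oEmpty] using E.img_subset (oDisj_oEmpty A)
  · simpa only [oUnion_comm _ B, oUnion_oEmpty] using E.img_subset (oDisj_oEmpty B).symm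

lemma img_oEmpty_right (h : oDisj A B) (hA : (F.obj A).Nonempty) (hB : (F.obj B).Nonempty) :
    E.img A (oEmpty r) = F.obj A :=
  ((Set.prod_eq_prod_iff_of_nonempty (Set.Nonempty.prod (s := (F.obj A : Set ℕ))
    hA hB)).mp (E.prod_eq_img_oEmpty_prod h)).1.symm

lemma img_oEmpty_left (h : oDisj A B) (hA : (F.obj A).Nonempty) (hB : (F.obj B).Nonempty) :
    E.img (oEmpty r) B = F.obj B :=
  ((Set.prod_eq_prod_iff_of_nonempty (Set.Nonempty.prod (s := (F.obj A : Set ℕ))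
    hA hB)).mp (E.prod_eq_img_oEmpty_prod h)).2.symm

lemma img_subset_img_swap (h : oDisj A B) (hA : (F.obj A).Nonempty)
    (hB : (F.obj B).Nonempty) : E.img A B ⊆ E.img B A := by
  have hD1 := E.img_inter_img h h.symm (oUnion_comm A B) (oInter_eq_oEmpty h)
    (oInter_self A) (oInter_self B) (oInter_eq_oEmpty h.symm)
  rw [E.img_oEmpty_left h.symm hB hA, E.img_oEmpty_right h.symm hB hA] at hD1
  exact Set.inter_eq_left.mp hD1

lemma img_comm (h : oDisj A B) (hA : (F.obj A).Nonempty) (hB : (F.obj B).Nonempty) :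
    E.img A B = E.img B A :=
  (E.img_subset_img_swap h hA hB).antisymm (E.img_subset_img_swap h.symm hB hA)

lemma img_oUnion_inter_img_oUnion (hXY : oDisj X Y) (hXC : oDisj X C) (hYC : oDisj Y C)
    (hX : (F.obj X).Nonempty) (hC : (F.obj C).Nonempty) :
    E.img (oUnion X Y) C ∩ E.img (oUnion X C) Y =
      E.η (oUnion X Y) C '' (E.img X Y ×ˢ (F.obj C : Set ℕ)) := by
  rw [E.img_inter_img (hXC.union_left hYC) (hXY.union_left hYC.symm)
    (oUnion_right_comm X Y C) (oInter_oUnion_oUnion hYC) (oInter_oUnion_self X Y)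
    (oInter_self_oUnion X C) (oInter_eq_oEmpty hYC.symm), E.img_oEmpty_right hXC.symm hC hX]

def tripleImg (X Y C : Obj r) : Set ℕ :=
  E.img (oUnion X Y) C ∩ E.img (oUnion X C) Y ∩ E.img (oUnion Y C) X

lemma tripleImg_eq_empty (h : F.obj X = ∅ ∨ F.obj Y = ∅ ∨ F.obj C = ∅) :
    E.tripleImg X Y C = ∅ := by
  rcases h with h | h | h <;> simp [tripleImg, img, h]

lemma image_img_prod_eq_tripleImg (hXY : oDisj X Y) (hXC : oDisj X C) (hYC : oDisj Y C) :
    E.η (oUnion X Y) C '' (E.img X Y ×ˢ (F.obj C : Set ℕ)) = E.tripleImg X Y C := by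
  by_cases hne : (F.obj X).Nonempty ∧ (F.obj Y).Nonempty ∧ (F.obj C).Nonempty
  · obtain ⟨hX, hY, hC⟩ := hne
    have hYX := E.img_oUnion_inter_img_oUnion hXY.symm hYC hXC hY hC
    rw [oUnion_comm Y X, E.img_comm hXY.symm hY hX] at hYX
    rw [tripleImg, E.img_oUnion_inter_img_oUnion hXY hXC hYC hX hC, ← hYX, Set.inter_assoc,
      Set.inter_self]
  · simp only [not_and_or, Finset.not_nonempty_iff_eq_empty] at hne
    rw [E.tripleImg_eq_empty hne]
    rcases hne with h | h | h <;> simp [img, h]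

lemma image_prod_img_eq_tripleImg (hXY : oDisj X Y) (hXC : oDisj X C) (hYC : oDisj Y C) :
    E.η C (oUnion X Y) '' ((F.obj C : Set ℕ) ×ˢ E.img X Y) = E.tripleImg X Y C := by
  by_cases hne : (F.obj X).Nonempty ∧ (F.obj Y).Nonempty ∧ (F.obj C).Nonempty
  · obtain ⟨⟨x, hx⟩, ⟨y, hy⟩, hC⟩ := hne
    have hCXY : oDisj C (oUnion X Y) := (hXC.union_left hYC).symm
    have hD1 := E.img_inter_img hCXY (hXY.union_left hYC.symm)
      (by rw [oUnion_comm C, oUnion_right_comm]) (oInter_self_oUnion X C)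
      (oInter_eq_oEmpty hYC.symm) (oInter_oUnion_oUnion hYC) (oInter_oUnion_self X Y)
    rw [E.img_oEmpty_right hXC.symm hC ⟨x, hx⟩,
      E.img_comm hCXY hC ⟨_, E.mem_η hXY x hx y hy⟩,
      E.img_oUnion_inter_img_oUnion hXY hXC hYC ⟨x, hx⟩ hC,
      E.image_img_prod_eq_tripleImg hXY hXC hYC] at hD1
    exact hD1.symm
  · simp only [not_and_or, Finset.not_nonempty_iff_eq_empty] at hne
    rw [E.tripleImg_eq_empty hne]
    rcases hne with h | h | h <;> simp [img, h]

lemma tripleImg_perm (Ωs : Fin 3 → Obj r) {a b c : Fin 3} (hab : a ≠ b) (hac : a ≠ c)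
    (hbc : b ≠ c) : E.tripleImg (Ωs a) (Ωs b) (Ωs c) = E.tripleImg (Ωs 0) (Ωs 1) (Ωs 2) := by
  ext x
  fin_cases a <;> fin_cases b <;> fin_cases c <;>
    simp only [Fin.reduceFinMk, Fin.isValue, tripleImg, Set.mem_inter_iff, oUnion_comm] at hab hac hbc ⊢ <;> tauto

end CompOp
lemma bigU_singleton {ι : Type} [DecidableEq ι] (Ωs : ι → Obj r) (i : ι) :
    bigU Ωs {i} = Ωs i :=
  funext fun _ => Finset.singleton_biUnion

lemma bigU_pair {ι : Type} [DecidableEq ι] (Ωs : ι → Obj r) (i j : ι) :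
    bigU Ωs {i, j} = oUnion (Ωs i) (Ωs j) :=
  funext fun _ => by simp [bigU, oUnion]

namespace Brack

variable {ι : Type} [DecidableEq ι] {F : Species r} {E : CompOp F} {Ωs : ι → Obj r}
  {leaf : Obj r → Set ℕ} {s : Finset ι} {B : Set ℕ}

lemma exists_of_card_eq_one (h : Brack F E Ωs leaf s B) (hs : s.card = 1) :
    ∃ i, s = {i} ∧ B = leaf (Ωs i) := by
  cases h with
  | single i => exact ⟨i, rfl, rfl⟩
  | node hst hs₁ ht₁ _ _ =>
    have := Finset.card_union_of_disjoint hst ▸ hs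
    have := hs₁.card_pos
    have := ht₁.card_pos
    omega

lemma exists_of_card_eq_two (h : Brack F E Ωs leaf s B) (hs : s.card = 2) :
    ∃ i j, i ≠ j ∧ s = {i, j} ∧ B = E.η (Ωs i) (Ωs j) '' (leaf (Ωs i) ×ˢ leaf (Ωs j)) := by
  cases h with
  | single i => simp at hs
  | node hst hs₁ ht₁ h₁ h₂ =>
    rw [Finset.card_union_of_disjoint hst] at hs
    have := hs₁.card_pos
    have := ht₁.card_pos
    obtain ⟨i, rfl, rfl⟩ := h₁.exists_of_card_eq_one (by omega)
    obtain ⟨j, rfl, rfl⟩ := h₂.exists_of_card_eq_one (by omega)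
    exact ⟨i, j, Finset.disjoint_singleton.mp hst, rfl, by rw [bigU_singleton, bigU_singleton]⟩

lemma exists_of_card_eq_three (h : Brack F E Ωs leaf s B) (hs : s.card = 3) :
    ∃ a b c, a ≠ b ∧ a ≠ c ∧ b ≠ c ∧
      (B = E.η (Ωs a) (oUnion (Ωs b) (Ωs c)) ''
          (leaf (Ωs a) ×ˢ (E.η (Ωs b) (Ωs c) '' (leaf (Ωs b) ×ˢ leaf (Ωs c)))) ∨
       B = E.η (oUnion (Ωs b) (Ωs c)) (Ωs a) ''
          ((E.η (Ωs b) (Ωs c) '' (leaf (Ωs b) ×ˢ leaf (Ωs c))) ×ˢ leaf (Ωs a))) := by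
  cases h with
  | single i => simp at hs
  | @node s₁ t₁ _ _ hst hs₁ ht₁ h₁ h₂ =>
    rw [Finset.card_union_of_disjoint hst] at hs
    have := hs₁.card_pos
    have := ht₁.card_pos
    rcases (by omega : s₁.card = 1 ∧ t₁.card = 2 ∨ s₁.card = 2 ∧ t₁.card = 1) with ⟨c₁, c₂⟩ | ⟨c₁, c₂⟩
    · obtain ⟨a, rfl, rfl⟩ := h₁.exists_of_card_eq_one c₁
      obtain ⟨b, c, hbc, rfl, rfl⟩ := h₂.exists_of_card_eq_two c₂
      have ha := Finset.disjoint_singleton_left.mp hst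
      simp only [Finset.mem_insert, Finset.mem_singleton, not_or] at ha
      exact ⟨a, b, c, ha.1, ha.2, hbc, Or.inl (by rw [bigU_singleton, bigU_pair])⟩
    · obtain ⟨b, c, hbc, rfl, rfl⟩ := h₁.exists_of_card_eq_two c₁
      obtain ⟨a, rfl, rfl⟩ := h₂.exists_of_card_eq_one c₂
      have ha := Finset.disjoint_singleton_right.mp hst
      simp only [Finset.mem_insert, Finset.mem_singleton, not_or] at ha
      exact ⟨a, b, c, ha.1, ha.2, hbc, Or.inr (by rw [bigU_singleton, bigU_pair])⟩

end Brack

theorem stmt3_general {r : ℕ} (F : Species r) (E : CompOp F)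
    (Ωs : Fin 3 → Obj r) (hd : ∀ i j, i ≠ j → oDisj (Ωs i) (Ωs j))
    (B : Set ℕ) (hB : Brack F E Ωs (fun Ω => (F.obj Ω : Set ℕ)) Finset.univ B) :
    B = E.η (oUnion (Ωs 0) (Ωs 1)) (Ωs 2) '' ((F.obj (oUnion (Ωs 0) (Ωs 1)) : Set ℕ) ×ˢ (F.obj (Ωs 2) : Set ℕ)) ∩
        E.η (oUnion (Ωs 0) (Ωs 2)) (Ωs 1) '' ((F.obj (oUnion (Ωs 0) (Ωs 2)) : Set ℕ) ×ˢ (F.obj (Ωs 1) : Set ℕ)) ∩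
        E.η (oUnion (Ωs 1) (Ωs 2)) (Ωs 0) '' ((F.obj (oUnion (Ωs 1) (Ωs 2)) : Set ℕ) ×ˢ (F.obj (Ωs 0) : Set ℕ)) := by
  obtain ⟨a, b, c, hab, hac, hbc, rfl | rfl⟩ := hB.exists_of_card_eq_three (by simp)
  · exact (E.image_prod_img_eq_tripleImg (hd b c hbc) (hd b a hab.symm) (hd c a hac.symm)).trans
      (E.tripleImg_perm Ωs hbc hab.symm hac.symm)
  · exact (E.image_img_prod_eq_tripleImg (hd b c hbc) (hd b a hab.symm) (hd c a hac.symm)).trans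
      (E.tripleImg_perm Ωs hbc hab.symm hac.symm)

/-- Every `Η`-bracketing of `F[Ω₁], F[Ω₂], F[Ω₃]` equals the triple intersection
`η(F[Ω₁⨿Ω₂]×F[Ω₃]) ∩ η(F[Ω₁⨿Ω₃]×F[Ω₂]) ∩ η(F[Ω₂⨿Ω₃]×F[Ω₁])`. -/
theorem stmt3 {r : ℕ} (hr : 0 < r) (F : Species r) (E : CompOp F)
    (hF : ∃ Ω : Obj r, (F.obj Ω).Nonempty)
    (Ωs : Fin 3 → Obj r) (hd : ∀ i j, i ≠ j → oDisj (Ωs i) (Ωs j))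
    (B : Set ℕ) (hB : Brack F E Ωs (fun Ω => (F.obj Ω : Set ℕ)) Finset.univ B) :
    B = E.η (oUnion (Ωs 0) (Ωs 1)) (Ωs 2) '' ((F.obj (oUnion (Ωs 0) (Ωs 1)) : Set ℕ) ×ˢ (F.obj (Ωs 2) : Set ℕ)) ∩
        E.η (oUnion (Ωs 0) (Ωs 2)) (Ωs 1) '' ((F.obj (oUnion (Ωs 0) (Ωs 2)) : Set ℕ) ×ˢ (F.obj (Ωs 1) : Set ℕ)) ∩
        E.η (oUnion (Ωs 1) (Ωs 2)) (Ωs 0) '' ((F.obj (oUnion (Ωs 1) (Ωs 2)) : Set ℕ) ×ˢ (F.obj (Ωs 0) : Set ℕ)) :=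
  stmt3_general F E Ωs hd B hB

end
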